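/- Let R be a commutative Noetherian ring, 𝔞 ⊊ R an ideal, and x₁,…,xₙ an R-regular sequence contained in 𝔞 with n = grade(𝔞). If 𝔭 is a prime ideal containing 𝔞 with depth(R_𝔭) = n, then 𝔭 is an associated prime of R/(x₁,…,xₙ). -/

import Mathlib

open RingTheory.Sequence IsLocalRing

/-- The depth of an `R`-module `M` over a local ring `R`: the supremum of lengths of
`M`-regular sequences contained in the maximal ideal. -/
noncomputable def localDepth (R : Type*) [CommRing R] [IsLocalRing R]
    (M : Type*) [AddCommGroup M] [Module R M] : ℕ∞ :=
  ⨆ (rs : List R) (_ : RingTheory.Sequence.IsRegular M rs ∧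
      ∀ x ∈ rs, x ∈ IsLocalRing.maximalIdeal R), (rs.length : ℕ∞)

/-- The grade of an ideal: supremum of lengths of `R`-regular sequences contained in it. -/
noncomputable def idealGrade {R : Type*} [CommRing R] (I : Ideal R) : ℕ∞ :=
  ⨆ (rs : List R) (_ : RingTheory.Sequence.IsRegular R rs ∧ ∀ x ∈ rs, x ∈ I),
    (rs.length : ℕ∞)

/-- The depth of the localization `R_𝔭`. -/
noncomputable def primeDepth {R : Type*} [CommRing R] (p : Ideal R) (hp : p.IsPrime) : ℕ∞ :=
  letI := hp
  localDepth (Localization.AtPrime p) (Localization.AtPrime p)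

/-- The depth of the localized module `M_𝔭` over `R_𝔭`. -/
noncomputable def primeDepthMod {R : Type*} [CommRing R] (p : Ideal R) (hp : p.IsPrime)
    (M : Type*) [AddCommGroup M] [Module R M] : ℕ∞ :=
  letI := hp
  localDepth (Localization.AtPrime p) (LocalizedModule p.primeCompl M)

/-- `M` has well-defined rank `r`: `M ⊗ Q(R)` is free of rank `r` over the total
quotient ring `Q(R)`. -/
def HasRank (R : Type*) [CommRing R] (M : Type*) [AddCommGroup M] [Module R M] (r : ℕ) : Prop :=
  Nonempty (LocalizedModule (nonZeroDivisors R) M ≃ₗ[Localization (nonZeroDivisors R)]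
    (Fin r → Localization (nonZeroDivisors R)))

/-- `M` is `m`-torsionless (characterization `(b_m)`):
`depth M_𝔭 ≥ min (m, depth R_𝔭)` for every prime `𝔭`. -/
def IsTorsionlessOfOrder (m : ℕ) (R : Type*) [CommRing R]
    (M : Type*) [AddCommGroup M] [Module R M] : Prop :=
  ∀ (p : Ideal R) (hp : p.IsPrime),
    min (m : ℕ∞) (primeDepth p hp) ≤ primeDepthMod p hp M

/-- `M` has projective dimension at most `n` over `R`. -/
def HasProjDimLE (R : Type u) [CommRing R] :
    ℕ → (M : Type u) → [AddCommGroup M] → [Module R M] → Prop :=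
  Nat.rec (motive := fun _ => (M : Type u) → [AddCommGroup M] → [Module R M] → Prop)
    (fun M _ _ => Module.Projective R M)
    (fun _ ih M _ _ => ∃ (k : ℕ) (f : (Fin k → R) →ₗ[R] M), Function.Surjective f ∧
      ih (LinearMap.ker f))

/-- `M` has projective dimension exactly `n` over `R`. -/
def ProjDimEq (R : Type u) [CommRing R] (n : ℕ)
    (M : Type u) [AddCommGroup M] [Module R M] : Prop :=
  HasProjDimLE R n M ∧ ∀ k, HasProjDimLE R k M → n ≤ k

/-- `M` has finite projective dimension over `R`. -/
def HasFiniteProjDim (R : Type u) [CommRing R]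
    (M : Type u) [AddCommGroup M] [Module R M] : Prop :=
  ∃ n, HasProjDimLE R n M

/-- `M` is torsion-free: the natural map `M → M ⊗ Q(R)` is injective. -/
def IsTorsionFreeMod (R : Type*) [CommRing R] (M : Type*) [AddCommGroup M] [Module R M] : Prop :=
  Function.Injective (LocalizedModule.mkLinearMap (nonZeroDivisors R) M)

/-- The localized module `M_𝔭` is free over `R_𝔭`. -/
def FreeAtPrime {R : Type*} [CommRing R] (p : Ideal R) (hp : p.IsPrime)
    (M : Type*) [AddCommGroup M] [Module R M] : Prop :=
  letI := hp
  Module.Free (Localization.AtPrime p) (LocalizedModule p.primeCompl M)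

/-- The element `x` generates a free rank-one submodule after localizing at `𝔭`,
i.e. the exact sequence `0 → R_𝔭·x → M_𝔭 → (M/Rx)_𝔭 → 0` has first term `≅ R_𝔭`. -/
def ElemLinIndepAt {R : Type*} [CommRing R] (p : Ideal R) (hp : p.IsPrime)
    (M : Type*) [AddCommGroup M] [Module R M] (x : M) : Prop :=
  letI := hp
  Function.Injective (LinearMap.toSpanSingleton (Localization.AtPrime p)
    (LocalizedModule p.primeCompl M) (LocalizedModule.mkLinearMap p.primeCompl M x))

/-- A (Noetherian) local ring is regular iff its maximal ideal is generated by a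
regular sequence. -/
def IsRegularLocalRingP (R : Type*) [CommRing R] [IsLocalRing R] : Prop :=
  ∃ rs : List R, RingTheory.Sequence.IsRegular R rs ∧
    Ideal.span {x | x ∈ rs} = IsLocalRing.maximalIdeal R

/-- The localization `R_𝔭` is a regular local ring. -/
def RegularAtPrime {R : Type*} [CommRing R] (p : Ideal R) (hp : p.IsPrime) : Prop :=
  letI := hp
  IsRegularLocalRingP (Localization.AtPrime p)

/-!
Localize at `𝔭`. The image of `x₁,…,xₙ` in `R_𝔭` is a regular sequence in the maximal ideal
`𝔪` of length `n = depth R_𝔭`, so it cannot be extended: every element of `𝔪` is a zero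
divisor on `R_𝔭/(x₁,…,xₙ)`. By prime avoidance over the finitely many associated primes,
`𝔪` is associated to `R_𝔭/(x₁,…,xₙ)`, and associated primes descend along localization.
-/

section AssociatedPrimes

variable {A M : Type*} [CommRing A] [AddCommGroup M] [Module A M]

theorem Ideal.exists_le_mem_associatedPrimes_of_forall_not_isSMulRegular [IsNoetherianRing A]
    [Module.Finite A M] {I : Ideal A} (hI : ∀ r ∈ I, ¬IsSMulRegular M r) :
    ∃ P ∈ associatedPrimes A M, I ≤ P :=
  (I.subset_union_prime_finite (associatedPrimes.finite A M) (f := id) 0 0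
    fun _ hP _ _ ↦ hP.isPrime).1 <| by
      simp_rw [id, biUnion_associatedPrimes_eq_compl_regular]
      exact hI

theorem IsLocalRing.maximalIdeal_mem_associatedPrimes_of_forall_not_isSMulRegular
    [IsLocalRing A] [IsNoetherianRing A] [Module.Finite A M]
    (h : ∀ r ∈ maximalIdeal A, ¬IsSMulRegular M r) :
    maximalIdeal A ∈ associatedPrimes A M := by
  obtain ⟨P, hP, hle⟩ :=
    (maximalIdeal A).exists_le_mem_associatedPrimes_of_forall_not_isSMulRegular h
  rwa [(maximalIdeal.isMaximal A).eq_of_le hP.isPrime.ne_top hle]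

end AssociatedPrimes

section Depth

variable {A M : Type*} [CommRing A] [IsLocalRing A] [AddCommGroup M] [Module A M]

theorem length_le_localDepth {rs : List A} (hreg : IsRegular M rs)
    (hmem : ∀ r ∈ rs, r ∈ maximalIdeal A) : (rs.length : ℕ∞) ≤ localDepth A M :=
  le_iSup₂ (f := fun (rs : List A) (_ : IsRegular M rs ∧ ∀ r ∈ rs, r ∈ maximalIdeal A) ↦
    (rs.length : ℕ∞)) rs ⟨hreg, hmem⟩

theorem RingTheory.Sequence.IsRegular.not_isSMulRegular_of_localDepth_le [Module.Finite A M]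
    {rs : List A} (hreg : IsRegular M rs) (hmem : ∀ r ∈ rs, r ∈ maximalIdeal A)
    (hdepth : localDepth A M ≤ rs.length) {t : A} (ht : t ∈ maximalIdeal A) :
    ¬IsSMulRegular (M ⧸ Ideal.ofList rs • (⊤ : Submodule A M)) t := by
  intro ht_reg
  have : Nontrivial M := hreg.nontrivial
  have hmem' : ∀ r ∈ rs ++ [t], r ∈ maximalIdeal A := by
    simpa only [List.mem_append, List.mem_singleton, or_imp, forall_and, forall_eq] using
      ⟨hmem, ht⟩
  have hext : IsRegular M (rs ++ [t]) :=
    .of_isWeaklyRegular_of_mem_maximalIdeal M hmem' <|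
      (isWeaklyRegular_append_iff M rs [t]).2
        ⟨hreg.toIsWeaklyRegular, (isWeaklyRegular_singleton_iff _ t).2 ht_reg⟩
  have := (length_le_localDepth hext hmem').trans hdepth
  rw [List.length_append, List.length_singleton, Nat.cast_le] at this
  omega

theorem RingTheory.Sequence.IsRegular.maximalIdeal_mem_associatedPrimes_of_localDepth_le
    [IsNoetherianRing A] [Module.Finite A M] {rs : List A} (hreg : IsRegular M rs)
    (hmem : ∀ r ∈ rs, r ∈ maximalIdeal A) (hdepth : localDepth A M ≤ rs.length) :
    maximalIdeal A ∈ associatedPrimes A (M ⧸ Ideal.ofList rs • (⊤ : Submodule A M)) :=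
  maximalIdeal_mem_associatedPrimes_of_forall_not_isSMulRegular fun _ ↦
    hreg.not_isSMulRegular_of_localDepth_le hmem hdepth

end Depth

open Module.associatedPrimes in
theorem Ideal.mem_associatedPrimes_quotient_of_maximalIdeal_mem_associatedPrimes_map
    {R : Type*} [CommRing R] [IsNoetherianRing R] (p : Ideal R) [p.IsPrime] (I : Ideal R)
    (h : maximalIdeal (Localization.AtPrime p) ∈ associatedPrimes (Localization.AtPrime p)
      (Localization.AtPrime p ⧸ I.map (algebraMap R (Localization.AtPrime p)))) :
    p ∈ associatedPrimes R (R ⧸ I) := by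
  let f := Algebra.linearMap R (Localization.AtPrime p)
  have hI : I.localized' (Localization.AtPrime p) p.primeCompl f =
      I.map (algebraMap R (Localization.AtPrime p)) :=
    Submodule.localized'_eq_span _ _ _ _
  rw [← hI] at h
  simpa [Localization.AtPrime.under_maximalIdeal] using
    comap_mem_associatedPrimes_of_mem_associatedPrimes_of_isLocalizedModule_of_fg
      p.primeCompl (I.toLocalizedQuotient' (Localization.AtPrime p) p.primeCompl f) _ h
      ((isNoetherianRing_iff_ideal_fg R).mp ‹_› _)

theorem stmt1_general {R : Type u} [CommRing R] [IsNoetherianRing R] (a : Ideal R)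
    (xs : List R) (hreg : RingTheory.Sequence.IsRegular R xs) (hmem : ∀ x ∈ xs, x ∈ a)
    (p : Ideal R) (hp : p.IsPrime) (hap : a ≤ p)
    (hdepth : primeDepth p hp = (xs.length : ℕ∞)) :
    p ∈ associatedPrimes R (R ⧸ Ideal.span {x | x ∈ xs}) := by
  let Rₚ := Localization.AtPrime p
  have hmemp : ∀ x ∈ xs, x ∈ p := fun x hx ↦ hap (hmem x hx)
  have hregₚ : IsRegular Rₚ (xs.map (algebraMap R Rₚ)) :=
    hreg.toIsWeaklyRegular.isRegular_of_isLocalization_of_mem Rₚ p hmemp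
  have hmemₚ : ∀ y ∈ xs.map (algebraMap R Rₚ), y ∈ maximalIdeal Rₚ := by
    simpa only [List.forall_mem_map, IsLocalization.AtPrime.to_map_mem_maximal_iff Rₚ p] using
      hmemp
  have hass := hregₚ.maximalIdeal_mem_associatedPrimes_of_localDepth_le hmemₚ <| by
    rw [List.length_map]
    exact hdepth.le
  rw [Ideal.smul_eq_mul, Ideal.mul_top, ← Ideal.map_ofList] at hass
  exact Ideal.mem_associatedPrimes_quotient_of_maximalIdeal_mem_associatedPrimes_map p _ hass

/-- If `x₁,…,xₙ` is a maximal regular sequence in `𝔞` (`n = grade 𝔞`) and `𝔭 ⊇ 𝔞` is prime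
with `depth R_𝔭 = n`, then `𝔭 ∈ Ass (R/(x₁,…,xₙ))`. -/
theorem stmt1 {R : Type u} [CommRing R] [IsNoetherianRing R] (a : Ideal R) (ha : a ≠ ⊤)
    (xs : List R) (hreg : RingTheory.Sequence.IsRegular R xs) (hmem : ∀ x ∈ xs, x ∈ a)
    (hlen : (xs.length : ℕ∞) = idealGrade a)
    (p : Ideal R) (hp : p.IsPrime) (hap : a ≤ p)
    (hdepth : primeDepth p hp = (xs.length : ℕ∞)) :
    p ∈ associatedPrimes R (R ⧸ Ideal.span {x | x ∈ xs}) :=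
  stmt1_general a xs hreg hmem p hp hap hdepth
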